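/- Let K_n be the complete graph on vertices P_1, …, P_n with n ≥ 3, and let σ be the automorphism fixing P_1 and cyclically permuting P_2, …, P_n. Then the cyclic group H = ⟨σ⟩ of order n−1 acts harmonically on K_n, the quotient K_n/H has more than one vertex, and every element of H fixes the divisors P_2 + ⋯ + P_n and (n−1)P_1. -/

import Mathlib

/-!
By Corry's criterion it suffices that the stabilizer `H_P` of every vertex acts freely on the
edges at `P`: then, for an edge orbit meeting `P` that is not collapsed, an element carrying one
edge at `P` of the orbit to another must fix `P`, so `H_P` acts simply transitively on these
edges and every such count equals `|H_P|`. A power of the `m`-cycle `finRotate m` fixing a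
point is trivial, so a nontrivial element of `⟨σ⟩` fixes only `P₁` and hence no edge. The
vertex `P₁` is a whole orbit, and both divisors are constant on orbits.
-/

open scoped Classical

namespace GraphDiv

variable {V : Type*}

/-- The Laplacian divisor of an integer-valued function on the vertices. -/
noncomputable def lap (G : SimpleGraph V) [Fintype V] (f : V → ℤ) : V → ℤ :=
  fun P => ∑ Q : V, if G.Adj P Q then f P - f Q else 0

/-- Linear equivalence of divisors: `D ∼ D'` iff `D - D' = Δ(f)` for some `f`. -/
def LinEquiv (G : SimpleGraph V) [Fintype V] (D D' : V → ℤ) : Prop :=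
  ∃ f : V → ℤ, D - D' = lap G f

/-- A divisor is effective if all its coefficients are nonnegative. -/
def Effective (D : V → ℤ) : Prop := ∀ P, 0 ≤ D P

/-- The degree of a divisor. -/
def degDiv [Fintype V] (D : V → ℤ) : ℤ := ∑ P : V, D P

/-- The complete linear system of a divisor. -/
def linSys (G : SimpleGraph V) [Fintype V] (D : V → ℤ) : Set (V → ℤ) :=
  {E | Effective E ∧ LinEquiv G E D}

/-- `RankEq G D r` says the Baker–Norine rank of `D` equals `r`. -/
def RankEq (G : SimpleGraph V) [Fintype V] (D : V → ℤ) (r : ℤ) : Prop :=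
  -1 ≤ r ∧
  (∀ E : V → ℤ, Effective E → degDiv E ≤ r → (linSys G (D - E)).Nonempty) ∧
  ∃ E : V → ℤ, Effective E ∧ degDiv E = r + 1 ∧ linSys G (D - E) = ∅

/-- The divisor consisting of a single vertex. -/
noncomputable def unit (P : V) : V → ℤ := fun Q => if Q = P then 1 else 0

/-- A graph is 2-edge-connected if it is connected and stays connected
after removing any single edge. -/
def TwoEdgeConnected (G : SimpleGraph V) : Prop :=
  G.Connected ∧ ∀ v w : V, G.Adj v w → (G.deleteEdges {s(v, w)}).Connected

/-- Action of a graph automorphism on divisors. -/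
def divAct {G : SimpleGraph V} (σ : G ≃g G) (D : V → ℤ) : V → ℤ :=
  fun v => D (σ.symm v)

/-- Two vertices lie in the same orbit of a subgroup of automorphisms. -/
def vrel {G : SimpleGraph V} (H : Subgroup (G ≃g G)) (v w : V) : Prop :=
  ∃ σ ∈ H, σ v = w

/-- An edge is collapsed in the quotient: its endpoints lie in the same vertex orbit. -/
def Collapsed {G : SimpleGraph V} (H : Subgroup (G ≃g G)) (e : Sym2 V) : Prop :=
  ∃ a b : V, e = s(a, b) ∧ vrel H a b

/-- The quotient morphism `G → G/H` is harmonic: for every vertex `P`, the number of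
edges at `P` lying above a given non-collapsed edge-orbit incident to the class of `P`
is independent of the choice of that edge-orbit. -/
def QuotHarmonic (G : SimpleGraph V) (H : Subgroup (G ≃g G)) : Prop :=
  ∀ (P : V) (e₁ e₂ : Sym2 V), e₁ ∈ G.edgeSet → e₂ ∈ G.edgeSet →
    (∃ σ ∈ H, P ∈ Sym2.map (⇑σ) e₁) → (∃ σ ∈ H, P ∈ Sym2.map (⇑σ) e₂) →
    ¬ Collapsed H e₁ → ¬ Collapsed H e₂ →
    Nat.card {e : Sym2 V // e ∈ G.edgeSet ∧ P ∈ e ∧ ∃ σ ∈ H, Sym2.map (⇑σ) e = e₁} =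
    Nat.card {e : Sym2 V // e ∈ G.edgeSet ∧ P ∈ e ∧ ∃ σ ∈ H, Sym2.map (⇑σ) e = e₂}

/-- `H` acts harmonically on `G`: for every subgroup `Δ ≤ H` the quotient morphism
`G → G/Δ` is harmonic. -/
def HarmonicAction (G : SimpleGraph V) (H : Subgroup (G ≃g G)) : Prop :=
  ∀ Δ : Subgroup (G ≃g G), Δ ≤ H → QuotHarmonic G Δ

/-- `P` is a Galois point with respect to `|D|`. -/
def IsGaloisPoint (G : SimpleGraph V) [Fintype V] (D : V → ℤ) (P : V) : Prop :=
  RankEq G (D - unit P) 1 ∧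
  (∀ Q : V, RankEq G (D - unit P - unit Q) 0) ∧
  ∃ H : Subgroup (G ≃g G), (Nat.card H : ℤ) = degDiv D - 1 ∧
    (∃ v w : V, ¬ vrel H v w) ∧
    HarmonicAction G H ∧
    ∃ E₁ E₂ : V → ℤ, E₁ ≠ E₂ ∧ E₁ ∈ linSys G (D - unit P) ∧ E₂ ∈ linSys G (D - unit P) ∧
      ∀ σ ∈ H, divAct σ E₁ = E₁ ∧ divAct σ E₂ = E₂

/-- A divisor is `q`-reduced. -/
def QReduced (G : SimpleGraph V) [Fintype V] (q : V) (D : V → ℤ) : Prop :=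
  (∀ P : V, P ≠ q → 0 ≤ D P) ∧
  ∀ S : Finset V, S.Nonempty → q ∉ S →
    ∃ P ∈ S, D P < (((G.neighborFinset P).filter (fun Q => Q ∉ S)).card : ℤ)

/-- The wheel graph on `m + 1` vertices: hub `none` and rim `some i` for `i : Fin m`,
with the rim a cycle via `i ↦ i + 1 (mod m)`. -/
def wheel (m : ℕ) : SimpleGraph (Option (Fin m)) where
  Adj v w :=
    match v, w with
    | none, none => False
    | none, some _ => True
    | some _, none => True
    | some i, some j => i ≠ j ∧ ((i.val + 1) % m = j.val ∨ (j.val + 1) % m = i.val)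
  symm := by
    constructor
    intro v w h
    cases v <;> cases w <;> simp_all <;> tauto
  loopless := by constructor; intro v; cases v <;> simp

/-- The 4-cycle `P₁P₂P₃P₄` with the chord `P₁P₃` (vertices `0,1,2,3`). -/
def g4 : SimpleGraph (Fin 4) :=
  SimpleGraph.fromRel (fun v w =>
    (v = 0 ∧ w = 1) ∨ (v = 1 ∧ w = 2) ∨ (v = 2 ∧ w = 3) ∨ (v = 3 ∧ w = 0) ∨ (v = 0 ∧ w = 2))

end GraphDiv

namespace GraphDiv

open Equiv

variable {V : Type*} {G : SimpleGraph V}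

/-- Corry's criterion: the stabilizer of each vertex `P` acts freely on the edges at `P`.
In a simple graph an automorphism fixing `P` fixes the edge `PQ` exactly when it fixes `Q`. -/
def ActsFreelyOnIncidentEdges (G : SimpleGraph V) (H : Subgroup (G ≃g G)) : Prop :=
  ∀ τ ∈ H, ∀ P Q, G.Adj P Q → τ P = P → τ Q = Q → τ = 1

theorem ActsFreelyOnIncidentEdges.mono {H Δ : Subgroup (G ≃g G)}
    (h : ActsFreelyOnIncidentEdges G H) (hΔ : Δ ≤ H) : ActsFreelyOnIncidentEdges G Δ :=
  fun τ hτ => h τ (hΔ hτ)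

theorem sym2_map_inv_map (τ : G ≃g G) (e : Sym2 V) : Sym2.map ⇑τ⁻¹ (Sym2.map τ e) = e := by
  simp [Sym2.map_map, RelIso.inv_apply_self]

theorem Collapsed.map {Δ : Subgroup (G ≃g G)} {e : Sym2 V} (he : Collapsed Δ e) {τ : G ≃g G}
    (hτ : τ ∈ Δ) : Collapsed Δ (Sym2.map τ e) := by
  obtain ⟨a, b, rfl, ρ, hρ, rfl⟩ := he
  exact ⟨τ a, τ (ρ a), rfl, τ * ρ * τ⁻¹, mul_mem (mul_mem hτ hρ) (inv_mem hτ),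
    by simp [RelIso.mul_apply, RelIso.inv_apply_self]⟩

theorem apply_eq_self_of_not_collapsed {Δ : Subgroup (G ≃g G)} {e : Sym2 V}
    (he : ¬ Collapsed Δ e) {τ : G ≃g G} (hτ : τ ∈ Δ) {P : V} (hP : P ∈ e)
    (hτP : P ∈ Sym2.map τ e) : τ P = P := by
  obtain ⟨Q, rfl⟩ := Sym2.mem_iff_exists.mp hP
  rcases Sym2.mem_map.mp hτP with ⟨x, hx, hτx⟩
  rcases Sym2.mem_iff.mp hx with rfl | rfl
  · exact hτx
  · exact absurd ⟨x, P, Sym2.eq_swap, τ, hτ, hτx⟩ he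

theorem card_edges_at_eq_card_stabilizer {Δ : Subgroup (G ≃g G)}
    (hfree : ActsFreelyOnIncidentEdges G Δ) {P : V} {e₀ : Sym2 V} (he₀ : e₀ ∈ G.edgeSet)
    (hP : ∃ σ ∈ Δ, P ∈ Sym2.map σ e₀) (hnc : ¬ Collapsed Δ e₀) :
    Nat.card {e : Sym2 V // e ∈ G.edgeSet ∧ P ∈ e ∧ ∃ σ ∈ Δ, Sym2.map (⇑σ) e = e₀} =
      Nat.card {τ : G ≃g G // τ ∈ Δ ∧ τ P = P} := by
  obtain ⟨σ, hσ, hPe⟩ := hP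
  set e' := Sym2.map σ e₀
  have he' : e' ∈ G.edgeSet := (SimpleGraph.Iso.map_mem_edgeSet_iff σ).mpr he₀
  have hnc' : ¬ Collapsed Δ e' := fun h => hnc (by
    simpa [e', sym2_map_inv_map] using h.map (inv_mem hσ))
  obtain ⟨Q, hQ⟩ := Sym2.mem_iff_exists.mp hPe
  have hPQ : G.Adj P Q := by rwa [← SimpleGraph.mem_edgeSet, ← hQ]
  have hmem (τ : {τ : G ≃g G // τ ∈ Δ ∧ τ P = P}) : Sym2.map τ.1 e' ∈ G.edgeSet ∧
      P ∈ Sym2.map τ.1 e' ∧ ∃ ρ ∈ Δ, Sym2.map ⇑ρ (Sym2.map τ.1 e') = e₀ :=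
    ⟨(SimpleGraph.Iso.map_mem_edgeSet_iff τ.1).mpr he', Sym2.mem_map.mpr ⟨P, hPe, τ.2.2⟩,
      σ⁻¹ * τ.1⁻¹, mul_mem (inv_mem hσ) (inv_mem τ.2.1), by
        simp [e', Sym2.map_map, RelIso.inv_apply_self]⟩
  refine (Nat.card_congr (Equiv.ofBijective (fun τ => ⟨_, hmem τ⟩) ⟨?_, ?_⟩)).symm
  · rintro ⟨τ₁, hτ₁, hτ₁P⟩ ⟨τ₂, hτ₂, hτ₂P⟩ h
    have hQ₁₂ : τ₁ Q = τ₂ Q := by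
      have h := congrArg Subtype.val h
      simp only [hQ, Sym2.map_mk, hτ₁P, hτ₂P] at h
      exact Sym2.congr_right.mp h
    have := hfree (τ₂⁻¹ * τ₁) (mul_mem (inv_mem hτ₂) hτ₁) P Q hPQ
      (by rw [RelIso.mul_apply, hτ₁P, ← hτ₂P, RelIso.inv_apply_self, hτ₂P])
      (by rw [RelIso.mul_apply, hQ₁₂, RelIso.inv_apply_self])
    exact Subtype.ext (inv_mul_eq_one.mp this).symm
  · rintro ⟨e, he, hPe, τ, hτ, rfl⟩
    have hρ : τ⁻¹ * σ⁻¹ ∈ Δ := mul_mem (inv_mem hτ) (inv_mem hσ)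
    have hmap : Sym2.map ⇑(τ⁻¹ * σ⁻¹) e' = e := by
      simp [e', Sym2.map_map, RelIso.inv_apply_self]
    refine ⟨⟨_, hρ, apply_eq_self_of_not_collapsed hnc' hρ hPe ?_⟩, Subtype.ext hmap⟩
    rwa [hmap]

theorem ActsFreelyOnIncidentEdges.quotHarmonic {Δ : Subgroup (G ≃g G)}
    (h : ActsFreelyOnIncidentEdges G Δ) : QuotHarmonic G Δ :=
  fun _ _ _ he₁ he₂ hP₁ hP₂ hnc₁ hnc₂ =>
    (card_edges_at_eq_card_stabilizer h he₁ hP₁ hnc₁).trans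
      (card_edges_at_eq_card_stabilizer h he₂ hP₂ hnc₂).symm

theorem ActsFreelyOnIncidentEdges.harmonicAction {H : Subgroup (G ≃g G)}
    (h : ActsFreelyOnIncidentEdges G H) : HarmonicAction G H :=
  fun _ hΔ => (h.mono hΔ).quotHarmonic

def completeGraphOptionHom (α : Type*) :
    Perm α →* ((⊤ : SimpleGraph (Option α)) ≃g (⊤ : SimpleGraph (Option α))) where
  toFun π := SimpleGraph.Iso.completeGraph (optionCongr π)
  map_one' := by ext v; cases v <;> rfl
  map_mul' _ _ := by ext v; cases v <;> rfl

section CompleteGraphOption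

variable {α : Type*}

theorem completeGraphOptionHom_injective : Function.Injective (completeGraphOptionHom α) :=
  fun _ _ h => Equiv.ext fun a => Option.some_injective α (congrArg (· (some a)) h)

theorem apply_none_of_mem_range {τ : (⊤ : SimpleGraph (Option α)) ≃g ⊤}
    (hτ : τ ∈ (completeGraphOptionHom α).range) : τ none = none := by
  obtain ⟨π, rfl⟩ := hτ
  rfl

theorem divAct_eq_self_of_mem_range {τ : (⊤ : SimpleGraph (Option α)) ≃g ⊤}
    (hτ : τ ∈ (completeGraphOptionHom α).range) {D : Option α → ℤ}
    (hD : ∀ a b, D (some a) = D (some b)) : divAct τ D = D := by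
  obtain ⟨π, rfl⟩ := hτ
  funext v
  cases v with
  | none => rfl
  | some a => exact hD _ _

theorem actsFreelyOnIncidentEdges_map {S : Subgroup (Perm α)}
    (hS : ∀ π ∈ S, ∀ a, π a = a → π = 1) :
    ActsFreelyOnIncidentEdges ⊤ (S.map (completeGraphOptionHom α)) := by
  rintro _ ⟨π, hπ, rfl⟩ P Q hPQ hP hQ
  suffices π = 1 by rw [this, map_one]
  cases P with
  | some a => exact hS π hπ a (Option.some_injective α hP)
  | none =>
    cases Q with
    | some b => exact hS π hπ b (Option.some_injective α hQ)
    | none => exact absurd rfl hPQ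

end CompleteGraphOption

theorem eq_one_of_mem_zpowers_finRotate {m : ℕ} (hm : 2 ≤ m) {π : Perm (Fin m)}
    (hπ : π ∈ Subgroup.zpowers (finRotate m)) {a : Fin m} (ha : π a = a) : π = 1 := by
  obtain ⟨k, rfl⟩ := mem_powers_iff_mem_zpowers.mpr hπ
  have ha' : finRotate m a ≠ a := by
    rw [← Perm.mem_support, support_finRotate_of_le hm]; exact Finset.mem_univ a
  exact ((isCycle_finRotate_of_le hm).pow_eq_one_iff' ha').mpr ha

theorem orderOf_finRotate {m : ℕ} (hm : 2 ≤ m) : orderOf (finRotate m) = m := by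
  rw [(isCycle_finRotate_of_le hm).orderOf, support_finRotate_of_le hm, Finset.card_univ,
    Fintype.card_fin]

end GraphDiv

open GraphDiv in
/-- On the complete graph on `Option (Fin m)` (`n = m + 1 ≥ 3`, `P₁ = none`), the
cyclic group generated by the automorphism fixing `P₁` and rotating the other
vertices has order `n - 1`, acts harmonically, has a quotient with more than one
vertex, and fixes the divisors `P₂ + ⋯ + Pₙ` and `(n-1)P₁`. -/
theorem stmt12 (m : ℕ) (hm : 2 ≤ m) :
    Nat.card (Subgroup.zpowers
        (SimpleGraph.Iso.completeGraph (Equiv.optionCongr (finRotate m)) :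
          (⊤ : SimpleGraph (Option (Fin m))) ≃g ⊤)) = m ∧
    HarmonicAction (⊤ : SimpleGraph (Option (Fin m)))
      (Subgroup.zpowers
        (SimpleGraph.Iso.completeGraph (Equiv.optionCongr (finRotate m)))) ∧
    (∃ v w : Option (Fin m),
      ¬ vrel (Subgroup.zpowers
          (SimpleGraph.Iso.completeGraph (Equiv.optionCongr (finRotate m)) :
            (⊤ : SimpleGraph (Option (Fin m))) ≃g ⊤)) v w) ∧
    ∀ τ ∈ Subgroup.zpowers
        (SimpleGraph.Iso.completeGraph (Equiv.optionCongr (finRotate m)) :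
          (⊤ : SimpleGraph (Option (Fin m))) ≃g ⊤),
      divAct τ (fun v => match v with | none => 0 | some _ => (1 : ℤ)) =
        (fun v => match v with | none => 0 | some _ => (1 : ℤ)) ∧
      divAct τ (fun v => match v with | none => (m : ℤ) | some _ => 0) =
        (fun v => match v with | none => (m : ℤ) | some _ => 0) := by
  set φ := completeGraphOptionHom (Fin m)
  have hσ : SimpleGraph.Iso.completeGraph (Equiv.optionCongr (finRotate m)) = φ (finRotate m) :=
    rfl
  have hH : Subgroup.zpowers (φ (finRotate m)) = (Subgroup.zpowers (finRotate m)).map φ :=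
    (φ.map_zpowers _).symm
  have hrange : Subgroup.zpowers (φ (finRotate m)) ≤ φ.range := hH ▸ Subgroup.map_le_range _ _
  simp only [hσ]
  refine ⟨?_, ?_, ?_, fun τ hτ => ?_⟩
  · rw [Nat.card_zpowers, orderOf_injective φ completeGraphOptionHom_injective,
      orderOf_finRotate hm]
  · have hfree := actsFreelyOnIncidentEdges_map fun _ hπ _ =>
      eq_one_of_mem_zpowers_finRotate hm hπ
    exact hH ▸ hfree.harmonicAction
  · refine ⟨none, some ⟨0, by omega⟩, fun ⟨τ, hτ, hτnone⟩ => ?_⟩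
    rw [apply_none_of_mem_range (hrange hτ)] at hτnone
    cases hτnone
  · exact ⟨divAct_eq_self_of_mem_range (hrange hτ) fun _ _ => rfl,
      divAct_eq_self_of_mem_range (hrange hτ) fun _ _ => rfl⟩
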